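/- Let d, n, k ≥ 1, Σ = Fin n, Q = Fin k, and let X ⊆ Σ^{ℤ^d} be a strongly locally aperiodic subshift. Let TM(X,k) denote the monoid of restrictions to X × Q × ℤ^d of moving-head (ℤ^d,n,k)-Turing machines mapping X × Q × ℤ^d into itself, and RTM(X,k) its group of invertible elements. Then the map Ψ, defined by Ψ(T)(x,q) = (σ^{−v}(y), r) whenever T(x,q,0) = (y,r,v), is injective on TM(X,k): if T, T′ ∈ TM(X,k) satisfy Ψ(T)(x,q) = Ψ(T′)(x,q) for all (x,q) ∈ X × Q, then T = T′ on X × Q × ℤ^d. Consequently Ψ induces a monoid isomorphism from TM(X,k) onto its image TM_fix(X,k) and a group isomorphism from RTM(X,k) onto RTM_fix(X,k). -/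

import Mathlib

/-- The shift action on configurations: `(shiftC v x) u = x (u - v)`. -/
def shiftC {d : ℕ} {A : Type*} (v : Fin d → ℤ) (x : (Fin d → ℤ) → A) : (Fin d → ℤ) → A :=
  fun u => x (u - v)

/-- The moving-head space `Σ^{ℤ^d} × Q × ℤ^d`. -/
abbrev Head (d n k : ℕ) : Type :=
  ((Fin d → ℤ) → Fin n) × Fin k × (Fin d → ℤ)

/-- `T` is a moving-head `(ℤ^d,n,k)`-Turing machine. -/
def IsTM (d n k : ℕ) (T : Head d n k → Head d n k) : Prop :=
  ∃ (Fi Fo : Finset (Fin d → ℤ))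
    (f : ((Fin d → ℤ) → Fin n) × Fin k → ((Fin d → ℤ) → Fin n) × Fin k × (Fin d → ℤ)),
    (∀ (x y : (Fin d → ℤ) → Fin n) (q : Fin k),
        (∀ u ∈ Fi, x u = y u) → f (x, q) = f (y, q)) ∧
    ∀ (x : (Fin d → ℤ) → Fin n) (q : Fin k) (v : Fin d → ℤ),
      T (x, q, v) =
        ((fun u => if u - v ∈ Fo then (f (shiftC (-v) x, q)).1 (u - v) else x u),
         (f (shiftC (-v) x, q)).2.1,
         v + (f (shiftC (-v) x, q)).2.2)

/-- The canonical map `Ψ` sending a moving-head machine to its moving-tape version: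
`Ψ(T)(x,q) = (σ^{-v} y, r)` whenever `T (x,q,0) = (y,r,v)`. -/
def Psi (d n k : ℕ) (T : Head d n k → Head d n k) :
    ((Fin d → ℤ) → Fin n) × Fin k → ((Fin d → ℤ) → Fin n) × Fin k :=
  fun p =>
    (shiftC (-(T (p.1, p.2, 0)).2.2) (T (p.1, p.2, 0)).1, (T (p.1, p.2, 0)).2.1)

/-- A subshift: a closed shift-invariant set of configurations. -/
def IsSubshift (d n : ℕ) (X : Set ((Fin d → ℤ) → Fin n)) : Prop :=
  IsClosed X ∧ ∀ (v : Fin d → ℤ), ∀ x ∈ X, shiftC v x ∈ X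

/-- `X` is strongly locally aperiodic. -/
def StronglyLocallyAperiodic (d n : ℕ) (X : Set ((Fin d → ℤ) → Fin n)) : Prop :=
  ∀ x ∈ X, ∀ F : Finset (Fin d → ℤ), ∀ v : Fin d → ℤ, v ≠ 0 →
    ∃ y ∈ X, (∀ u ∈ F, y u = x u) ∧
      ∃ u : Fin d → ℤ, u ∉ F ∧ u + v ∉ F ∧ y u ≠ y (u + v)

/-!
A moving-head machine is shift-equivariant, so it is determined by what it does with the head at
the origin, and there its image is recovered from `Ψ` once the head displacement is known. The
displacement depends only on a finite window `F` of the tape, and the machine leaves the tape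
unchanged outside `F`. If two machines with the same `Ψ` moved the head by `v ≠ v'`, strong local
aperiodicity gives a configuration that agrees with the given one on `F` but differs at two cells
`u` and `u + (v' - v)` outside `F`; comparing the two outputs of `Ψ` at `u - v` reads off these two
different symbols as equal.
-/

section Shift

variable {d : ℕ} {A : Type*}

@[simp]
theorem shiftC_apply (v : Fin d → ℤ) (x : (Fin d → ℤ) → A) (u : Fin d → ℤ) :
    shiftC v x u = x (u - v) := rfl

@[simp]
theorem shiftC_zero (x : (Fin d → ℤ) → A) : shiftC 0 x = x := by
  funext u
  simp

theorem shiftC_injective (v : Fin d → ℤ) : Function.Injective (shiftC (A := A) v) := by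
  intro x y h
  funext u
  simpa using congrFun h (u + v)

end Shift

theorem Psi_fst_apply {d n k : ℕ} (T : Head d n k → Head d n k) (x : (Fin d → ℤ) → Fin n)
    (q : Fin k) (u : Fin d → ℤ) :
    (Psi d n k T (x, q)).1 u = (T (x, q, 0)).1 (u + (T (x, q, 0)).2.2) := by
  simp [Psi]

theorem eq_of_Psi_eq_of_move_eq {d n k : ℕ} {T T' : Head d n k → Head d n k}
    {x : (Fin d → ℤ) → Fin n} {q : Fin k} (hPsi : Psi d n k T (x, q) = Psi d n k T' (x, q))
    (hmove : (T (x, q, 0)).2.2 = (T' (x, q, 0)).2.2) : T (x, q, 0) = T' (x, q, 0) := by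
  simp only [Psi, Prod.mk.injEq, hmove] at hPsi
  exact Prod.ext (shiftC_injective _ hPsi.1) (Prod.ext hPsi.2 hmove)

namespace IsTM

variable {d n k : ℕ} {T T' : Head d n k → Head d n k}

theorem apply_eq_shiftC (hT : IsTM d n k T) (x : (Fin d → ℤ) → Fin n) (q : Fin k)
    (v : Fin d → ℤ) :
    T (x, q, v) =
      (shiftC v (T (shiftC (-v) x, q, 0)).1, (T (shiftC (-v) x, q, 0)).2.1,
        v + (T (shiftC (-v) x, q, 0)).2.2) := by
  obtain ⟨-, Fo, f, -, hTf⟩ := hT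
  rw [hTf, hTf]
  simp only [sub_zero, neg_zero, shiftC_zero, zero_add, Prod.mk.injEq, and_true]
  funext u
  simp

theorem exists_window (hT : IsTM d n k T) :
    ∃ F : Finset (Fin d → ℤ),
      (∀ (x y : (Fin d → ℤ) → Fin n) (q : Fin k), (∀ u ∈ F, x u = y u) →
        (T (x, q, 0)).2.2 = (T (y, q, 0)).2.2) ∧
      ∀ (x : (Fin d → ℤ) → Fin n) (q : Fin k), ∀ u ∉ F, (T (x, q, 0)).1 u = x u := by
  obtain ⟨Fi, Fo, f, hf, hTf⟩ := hT
  refine ⟨Fi ∪ Fo, fun x y q hxy => ?_, fun x q u hu => ?_⟩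
  · simp only [hTf, neg_zero, shiftC_zero, zero_add]
    rw [hf x y q fun u hu => hxy u (Finset.mem_union_left _ hu)]
  · simp only [hTf, sub_zero]
    exact if_neg fun h => hu (Finset.mem_union_right _ h)

theorem eqOn_of_eqOn_origin {X : Set ((Fin d → ℤ) → Fin n)}
    (hX : ∀ (v : Fin d → ℤ), ∀ x ∈ X, shiftC v x ∈ X) (hT : IsTM d n k T) (hT' : IsTM d n k T')
    (h0 : ∀ x ∈ X, ∀ q : Fin k, T (x, q, 0) = T' (x, q, 0)) :
    ∀ x ∈ X, ∀ (q : Fin k) (v : Fin d → ℤ), T (x, q, v) = T' (x, q, v) := by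
  intro x hx q v
  rw [hT.apply_eq_shiftC, hT'.apply_eq_shiftC, h0 _ (hX (-v) x hx)]

theorem move_eq_of_Psi_eq {X : Set ((Fin d → ℤ) → Fin n)}
    (hap : StronglyLocallyAperiodic d n X) (hT : IsTM d n k T) (hT' : IsTM d n k T')
    (hPsi : ∀ x ∈ X, ∀ q : Fin k, Psi d n k T (x, q) = Psi d n k T' (x, q))
    {x : (Fin d → ℤ) → Fin n} (hx : x ∈ X) (q : Fin k) :
    (T (x, q, 0)).2.2 = (T' (x, q, 0)).2.2 := by
  obtain ⟨F, hmove, hfix⟩ := hT.exists_window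
  obtain ⟨F', hmove', hfix'⟩ := hT'.exists_window
  set v := (T (x, q, 0)).2.2
  set v' := (T' (x, q, 0)).2.2
  by_contra hne
  obtain ⟨z, hzX, hzx, u, hu, huw, hzu⟩ :=
    hap x hx (F ∪ F') (v' - v) (sub_ne_zero.mpr (Ne.symm hne))
  have hv : (T (z, q, 0)).2.2 = v :=
    hmove z x q fun s hs => hzx s (Finset.mem_union_left _ hs)
  have hv' : (T' (z, q, 0)).2.2 = v' :=
    hmove' z x q fun s hs => hzx s (Finset.mem_union_right _ hs)
  have hPsi_z := congrFun (congrArg Prod.fst (hPsi z hzX q)) (u - v)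
  rw [Psi_fst_apply, Psi_fst_apply, hv, hv', sub_add_cancel, sub_add_comm, add_comm (v' - v),
    hfix z q u (fun h => hu (Finset.mem_union_left _ h)),
    hfix' z q _ (fun h => huw (Finset.mem_union_right _ h))] at hPsi_z
  exact hzu hPsi_z

end IsTM

theorem Psi_injective_on_stronglyLocallyAperiodic_general
    (d n k : ℕ)
    (X : Set ((Fin d → ℤ) → Fin n))
    (hX : IsSubshift d n X) (hap : StronglyLocallyAperiodic d n X)
    (T T' : Head d n k → Head d n k)
    (hT : IsTM d n k T) (hT' : IsTM d n k T')
    (hPsi : ∀ x ∈ X, ∀ q : Fin k, Psi d n k T (x, q) = Psi d n k T' (x, q)) :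
    ∀ x ∈ X, ∀ (q : Fin k) (v : Fin d → ℤ), T (x, q, v) = T' (x, q, v) :=
  IsTM.eqOn_of_eqOn_origin hX.2 hT hT' fun _ hx q =>
    eq_of_Psi_eq_of_move_eq (hPsi _ hx q) (IsTM.move_eq_of_Psi_eq hap hT hT' hPsi hx q)

/-- Let `X ⊆ Σ^{ℤ^d}` be a strongly locally aperiodic subshift and
let `T, T'` be moving-head `(ℤ^d,n,k)`-Turing machines mapping `X × Q × ℤ^d` into
itself.  If `Ψ(T)` and `Ψ(T')` agree on `X × Q`, then `T = T'` on `X × Q × ℤ^d`;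
hence `Ψ` induces a monoid isomorphism of `TM(X,k)` onto `TM_fix(X,k)` and a group
isomorphism of `RTM(X,k)` onto `RTM_fix(X,k)`. -/
theorem Psi_injective_on_stronglyLocallyAperiodic
    (d n k : ℕ) (hd : 1 ≤ d) (hn : 1 ≤ n) (hk : 1 ≤ k)
    (X : Set ((Fin d → ℤ) → Fin n))
    (hX : IsSubshift d n X) (hap : StronglyLocallyAperiodic d n X)
    (T T' : Head d n k → Head d n k)
    (hT : IsTM d n k T) (hT' : IsTM d n k T')
    (hTX : ∀ x ∈ X, ∀ (q : Fin k) (v : Fin d → ℤ), (T (x, q, v)).1 ∈ X)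
    (hT'X : ∀ x ∈ X, ∀ (q : Fin k) (v : Fin d → ℤ), (T' (x, q, v)).1 ∈ X)
    (hPsi : ∀ x ∈ X, ∀ q : Fin k, Psi d n k T (x, q) = Psi d n k T' (x, q)) :
    ∀ x ∈ X, ∀ (q : Fin k) (v : Fin d → ℤ), T (x, q, v) = T' (x, q, v) :=
  Psi_injective_on_stronglyLocallyAperiodic_general d n k X hX hap T T' hT hT' hPsi
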